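/- arXiv:2406.06849 — 4 statements merged into one kernel-verified Lean document; each statement's English description precedes it below -/
import Mathlib

section
/- Let u_1, …, u_N ∈ ℝ³ be events with pairwise distinct coordinates in each component, let g : ℝ³ → ℝ be differentiable with M-Lipschitz gradient, and let μ, α ≥ 0. Define the intensity λ(u) = μ + α Σ_{m=1}^N g(u − u_m) for u ∈ ℝ³. Let Δ = (Δ_X, Δ_Y, Δ_T) be grid stepsizes satisfying Assumption 1 (Δ_X < min_{n≠m}|x_n − x_m|, Δ_Y < min_{n≠m}|y_n − y_m|, Δ_T < min_{n≠m}|t_n − t_m|), let δ_m ∈ ℝ³ denote the perturbation of event u_m induced by projection onto the grid (so each component of δ_m is bounded in absolute value by the corresponding half-stepsize), and define the discretized intensity at a grid point p ∈ ℝ³ by λ̃(p) = μ + α Σ_{m=1}^N g(p − u_m − δ_m). Then for every grid point p: |λ̃(p) − λ(p) + α Σ_{m=1}^N ⟨δ_m, ∇g(p − u_m)⟩| ≤ (α·N·M/8)·‖Δ‖₂², where ‖Δ‖₂² = Δ_X² + Δ_Y² + Δ_T². -/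
open scoped RealInnerProductSpace

open Finset Set

/-! Along the segment `t ↦ x + t • v`, the remainder `f (x + t • v) - f x - t • f' x v` has
derivative `(f' (x + t • v) - f' x) v`, of norm at most `M t ‖v‖²`; comparing with the
boundary function `M / 2 ‖v‖² t²` gives the quadratic Taylor bound with constant `M / 2`.
For the discretized intensity each event contributes such a remainder with `v = δₘ`, and
`‖δₘ‖² ≤ ‖Δ‖₂² / 4` by the half-stepsize bounds. -/

theorem norm_image_add_sub_sub_le_of_lipschitz_fderiv {E F : Type*}
    [NormedAddCommGroup E] [NormedSpace ℝ E] [NormedAddCommGroup F] [NormedSpace ℝ F]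
    {f : E → F} {f' : E → E →L[ℝ] F} {M : ℝ} (hf : ∀ x, HasFDerivAt f (f' x) x)
    (hlip : ∀ a b, ‖f' a - f' b‖ ≤ M * ‖a - b‖) (x v : E) :
    ‖f (x + v) - f x - f' x v‖ ≤ M / 2 * ‖v‖ ^ 2 := by
  set r : ℝ → F := fun t => f (x + t • v) - f x - t • f' x v
  have hr : ∀ t, HasDerivAt r ((f' (x + t • v) - f' x) v) t := by
    intro t
    have hpath : HasDerivAt (fun t : ℝ => x + t • v) v t := by
      simpa using ((hasDerivAt_id t).smul_const v).const_add x
    have := (((hf _).comp_hasDerivAt t hpath).sub_const (f x)).sub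
      ((hasDerivAt_id t).smul_const (f' x v))
    exact this.congr_deriv (by simp)
  have hbound : ∀ t ∈ Ico (0 : ℝ) 1, ‖(f' (x + t • v) - f' x) v‖ ≤ M * ‖v‖ ^ 2 * t := by
    rintro t ⟨ht, -⟩
    calc ‖(f' (x + t • v) - f' x) v‖ ≤ ‖f' (x + t • v) - f' x‖ * ‖v‖ :=
          ContinuousLinearMap.le_opNorm _ _
      _ ≤ M * ‖x + t • v - x‖ * ‖v‖ := by gcongr; exact hlip _ _
      _ = M * ‖v‖ ^ 2 * t := by
          rw [add_sub_cancel_left, norm_smul, Real.norm_of_nonneg ht]; ring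
  have hboundary : ∀ t, HasDerivAt (fun t : ℝ => M / 2 * ‖v‖ ^ 2 * t ^ 2) (M * ‖v‖ ^ 2 * t) t :=
    fun t => ((hasDerivAt_pow 2 t).const_mul _).congr_deriv (by push_cast; ring)
  have key := image_norm_le_of_norm_deriv_right_le_deriv_boundary
    (fun t _ => (hr t).continuousAt.continuousWithinAt) (fun t _ => (hr t).hasDerivWithinAt)
    (by simp [r]) hboundary hbound (right_mem_Icc.2 zero_le_one)
  simpa [r] using key

theorem abs_image_sub_sub_add_inner_gradient_le {E : Type*}
    [NormedAddCommGroup E] [InnerProductSpace ℝ E] [CompleteSpace E]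
    {g : E → ℝ} {M : ℝ} (hg : Differentiable ℝ g)
    (hlip : ∀ a b, ‖gradient g a - gradient g b‖ ≤ M * ‖a - b‖) (x v : E) :
    |g (x - v) - g x + ⟪v, gradient g x⟫| ≤ M / 2 * ‖v‖ ^ 2 := by
  have key := norm_image_add_sub_sub_le_of_lipschitz_fderiv
    (f' := fun a => InnerProductSpace.toDual ℝ E (gradient g a))
    (fun a => (hg a).hasGradientAt.hasFDerivAt)
    (fun a b => by simpa only [← map_sub, LinearIsometryEquiv.norm_map] using hlip a b) x (-v)
  simpa [InnerProductSpace.toDual_apply_apply, ← sub_eq_add_neg, real_inner_comm] using key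

theorem nonneg_of_norm_sub_le_mul_norm_sub {E F : Type*} [NormedAddCommGroup E] [Nontrivial E]
    [SeminormedAddCommGroup F] {f : E → F} {M : ℝ} (h : ∀ a b, ‖f a - f b‖ ≤ M * ‖a - b‖) :
    0 ≤ M := by
  obtain ⟨a, ha⟩ := exists_ne (0 : E)
  have := (norm_nonneg _).trans (h a 0)
  exact nonneg_of_mul_nonneg_left this (by simpa using ha)

theorem EuclideanSpace.norm_sq_le_sum_sq_of_abs_le {ι : Type*} [Fintype ι]
    (x : EuclideanSpace ℝ ι) {c : ι → ℝ} (h : ∀ i, |x i| ≤ c i) :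
    ‖x‖ ^ 2 ≤ ∑ i, c i ^ 2 := by
  rw [EuclideanSpace.norm_sq_eq]
  gcongr with i
  exact h i

theorem discretized_intensity_taylor_bound_general
    (N : ℕ) (u : Fin N → EuclideanSpace ℝ (Fin 3))
    (g : EuclideanSpace ℝ (Fin 3) → ℝ) (M : ℝ)
    (hg : Differentiable ℝ g)
    (hlip : ∀ a b : EuclideanSpace ℝ (Fin 3),
      ‖gradient g a - gradient g b‖ ≤ M * ‖a - b‖)
    (μ α : ℝ) (hα : 0 ≤ α)
    (ΔX ΔY ΔT : ℝ)
    (δ : Fin N → EuclideanSpace ℝ (Fin 3))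
    (hδX : ∀ m, |δ m 0| ≤ ΔX / 2)
    (hδY : ∀ m, |δ m 1| ≤ ΔY / 2)
    (hδT : ∀ m, |δ m 2| ≤ ΔT / 2)
    (p : EuclideanSpace ℝ (Fin 3)) :
    |(μ + α * ∑ m, g (p - u m - δ m)) - (μ + α * ∑ m, g (p - u m)) +
      α * ∑ m, ⟪δ m, gradient g (p - u m)⟫| ≤
      α * N * M / 8 * (ΔX ^ 2 + ΔY ^ 2 + ΔT ^ 2) := by
  have hM : 0 ≤ M := nonneg_of_norm_sub_le_mul_norm_sub hlip
  have hδ : ∀ m, ‖δ m‖ ^ 2 ≤ (ΔX / 2) ^ 2 + (ΔY / 2) ^ 2 + (ΔT / 2) ^ 2 := fun m => by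
    simpa [Fin.sum_univ_three] using EuclideanSpace.norm_sq_le_sum_sq_of_abs_le (δ m)
      (c := ![ΔX / 2, ΔY / 2, ΔT / 2]) (by simp [Fin.forall_fin_succ, hδX, hδY, hδT])
  have hterm : ∀ m, |g (p - u m - δ m) - g (p - u m) + ⟪δ m, gradient g (p - u m)⟫| ≤
      M / 8 * (ΔX ^ 2 + ΔY ^ 2 + ΔT ^ 2) := fun m =>
    calc _ ≤ M / 2 * ‖δ m‖ ^ 2 := abs_image_sub_sub_add_inner_gradient_le hg hlip _ _
      _ ≤ M / 2 * ((ΔX / 2) ^ 2 + (ΔY / 2) ^ 2 + (ΔT / 2) ^ 2) := by gcongr; exact hδ m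
      _ = M / 8 * (ΔX ^ 2 + ΔY ^ 2 + ΔT ^ 2) := by ring
  calc _ = |α * ∑ m, (g (p - u m - δ m) - g (p - u m) + ⟪δ m, gradient g (p - u m)⟫)| := by
        rw [sum_add_distrib, sum_sub_distrib]; ring_nf
    _ = α * |∑ m, (g (p - u m - δ m) - g (p - u m) + ⟪δ m, gradient g (p - u m)⟫)| := by
        rw [abs_mul, abs_of_nonneg hα]
    _ ≤ α * ∑ m, |g (p - u m - δ m) - g (p - u m) + ⟪δ m, gradient g (p - u m)⟫| := by
        gcongr; exact abs_sum_le_sum_abs _ _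
    _ ≤ α * ∑ _m : Fin N, M / 8 * (ΔX ^ 2 + ΔY ^ 2 + ΔT ^ 2) := by
        gcongr with m; exact hterm m
    _ = α * N * M / 8 * (ΔX ^ 2 + ΔY ^ 2 + ΔT ^ 2) := by
        simp only [sum_const, card_univ, Fintype.card_fin, nsmul_eq_mul]; ring

/-- First claim of Proposition 1, with explicit constant: under Assumption 1 on the
grid stepsizes, the discretized intensity `λ̃(p) = μ + α Σₘ g(p - uₘ - δₘ)` differs
from `λ(p) - α Σₘ ⟪δₘ, ∇g(p - uₘ)⟫` by at most `(α N M / 8)·‖Δ‖₂²` at every grid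
point `p`, where `‖Δ‖₂² = ΔX² + ΔY² + ΔT²`. -/
theorem discretized_intensity_taylor_bound
    (N : ℕ) (u : Fin N → EuclideanSpace ℝ (Fin 3))
    (g : EuclideanSpace ℝ (Fin 3) → ℝ) (M : ℝ)
    (hg : Differentiable ℝ g)
    (hlip : ∀ a b : EuclideanSpace ℝ (Fin 3),
      ‖gradient g a - gradient g b‖ ≤ M * ‖a - b‖)
    (μ α : ℝ) (hμ : 0 ≤ μ) (hα : 0 ≤ α)
    (ΔX ΔY ΔT : ℝ)
    (hAX : ∀ n m, n ≠ m → ΔX < |u n 0 - u m 0|)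
    (hAY : ∀ n m, n ≠ m → ΔY < |u n 1 - u m 1|)
    (hAT : ∀ n m, n ≠ m → ΔT < |u n 2 - u m 2|)
    (δ : Fin N → EuclideanSpace ℝ (Fin 3))
    (hδX : ∀ m, |δ m 0| ≤ ΔX / 2)
    (hδY : ∀ m, |δ m 1| ≤ ΔY / 2)
    (hδT : ∀ m, |δ m 2| ≤ ΔT / 2)
    (p : EuclideanSpace ℝ (Fin 3)) :
    |(μ + α * ∑ m, g (p - u m - δ m)) - (μ + α * ∑ m, g (p - u m)) +
      α * ∑ m, ⟪δ m, gradient g (p - u m)⟫| ≤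
      α * N * M / 8 * (ΔX ^ 2 + ΔY ^ 2 + ΔT ^ 2) :=
  discretized_intensity_taylor_bound_general N u g M hg hlip μ α hα ΔX ΔY ΔT δ hδX hδY hδT p
end

section
/- Let u_1, …, u_N ∈ [−S, S]² × [0, T] be events with pairwise distinct coordinates in each component, let g : ℝ³ → ℝ be bounded and differentiable with M-Lipschitz gradient, and let μ, α ≥ 0. Define the intensity λ(u) = μ + α Σ_{m=1}^N g(u − u_m) and the continuous ℓ₂ loss L = ∫_{[−S,S]²×[0,T]} λ(u)² du − 2 Σ_{n=1}^N λ(u_n). For grid stepsizes Δ = (Δ_X, Δ_Y, Δ_T) with 2S/Δ_X, 2S/Δ_Y and T/Δ_T positive integers G_X, G_Y, G_T, let ũ_n = u_n + δ_n denote the projection of u_n onto the grid {(−S + v_xΔ_X, −S + v_yΔ_Y, v_tΔ_T) : 0 ≤ v_x ≤ G_X, 0 ≤ v_y ≤ G_Y, 0 ≤ v_t ≤ G_T} (each component of δ_n bounded in absolute value by the corresponding half-stepsize), define the discretized intensity at a grid point p by λ̃(p) = μ + α Σ_m g(p − ũ_m), and the discretized loss L_G = Δ_XΔ_YΔ_T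 Σ_{grid points p} λ̃(p)² − 2 Σ_{n=1}^N λ̃(ũ_n). Then there exist constants C₁, C₂ ≥ 0, depending only on μ, α, g, M, S, T, N and the events (not on Δ), such that for every such grid satisfying Assumption 1 (Δ_X < min_{n≠m}|x_n − x_m|, Δ_Y < min_{n≠m}|y_n − y_m|, Δ_T < min_{n≠m}|t_n − t_m|) and with max(Δ_X, Δ_Y, Δ_T) ≤ 1: L_G ≤ L + C₁‖Δ‖₂ + 2α Σ_{n=1}^N Σ_{m=1}^N ⟨δ_m − δ_n, ∇g(u_n − u_m)⟩ + C₂‖Δ‖₂². -/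
/-!
For the data term, the descent inequality `|g (w + h) - g w - ⟪∇g w, h⟫| ≤ M ‖h‖²` (mean value
inequality for `g - ⟪∇g w, ·⟫`) applied to `w = uₙ - uₘ`, `h = δₙ - δₘ` gives exactly the linear
term of the statement up to `O(‖Δ‖²)`.

For the integral term, every grid point `v` with all indices below the grid sizes is the lowest
corner of a half-open cell of volume `ΔX ΔY ΔT` inside the domain, and these cells are disjoint.
A bounded function with Lipschitz gradient is itself Lipschitz, so on the cell of `v` the
discretized intensity differs from the continuous one by `O(‖Δ‖)`; hence
`ΔX ΔY ΔT λ̃(v)² ≤ ∫_cell λ² + O(‖Δ‖) · vol(cell)`. The remaining grid points form a single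
boundary layer of total volume `(2S + ΔX)(2S + ΔY)(T + ΔT) - 4S²T = O(‖Δ‖)`, on which `λ̃²` is
bounded.
-/

open scoped RealInnerProductSpace NNReal
open MeasureTheory Set Finset Function

local notation "E³" => EuclideanSpace ℝ (Fin 3)

section Gradient

variable {F : Type*} [NormedAddCommGroup F] [InnerProductSpace ℝ F] [CompleteSpace F]
  {g : F → ℝ} {K : ℝ≥0}

lemma norm_fderiv_sub_fderiv_eq (a b : F) :
    ‖fderiv ℝ g a - fderiv ℝ g b‖ = ‖gradient g a - gradient g b‖ := by
  rw [gradient, gradient, ← map_sub, LinearIsometryEquiv.norm_map]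

lemma abs_sub_sub_inner_gradient_le (hg : Differentiable ℝ g)
    (hK : LipschitzWith K (gradient g)) (w h : F) :
    |g (w + h) - g w - ⟪gradient g w, h⟫| ≤ K * ‖h‖ ^ 2 := by
  have bound : ∀ x ∈ Metric.closedBall w ‖h‖, ‖fderiv ℝ g x - fderiv ℝ g w‖ ≤ K * ‖h‖ := by
    intro x hx
    rw [norm_fderiv_sub_fderiv_eq, ← dist_eq_norm]
    exact (hK.dist_le_mul x w).trans (by gcongr; exact hx)
  have := (convex_closedBall w ‖h‖).norm_image_sub_le_of_norm_fderiv_le' (fun x _ => hg x) bound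
    (Metric.mem_closedBall_self (norm_nonneg h)) (y := w + h) (by simp)
  rw [(hg w).hasGradientAt.hasFDerivAt.fderiv] at this
  simpa [InnerProductSpace.toDual_apply_apply, sq, mul_assoc] using this

/-- Descent inequality along the gradient with step `1 / (2K)`, squeezed by `|g| ≤ B`. -/
lemma norm_gradient_sq_le (hg : Differentiable ℝ g) (hK : LipschitzWith K (gradient g))
    (hK0 : 0 < K) {B : ℝ} (hB : ∀ p, |g p| ≤ B) (a : F) :
    ‖gradient g a‖ ^ 2 ≤ 8 * K * B := by
  set v := gradient g a
  set t : ℝ := 1 / (2 * K)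
  have hK0' : (0 : ℝ) < K := hK0
  have hdescent := abs_sub_sub_inner_gradient_le hg hK a (t • v)
  rw [real_inner_smul_right, real_inner_self_eq_norm_sq, norm_smul, Real.norm_eq_abs,
    mul_pow, sq_abs] at hdescent
  have hdescent' := (abs_le.mp hdescent).1
  have hstep := abs_le.mp (hB (a + t • v))
  have hbase := abs_le.mp (hB a)
  have key : t * ‖v‖ ^ 2 - K * (t ^ 2 * ‖v‖ ^ 2) = ‖v‖ ^ 2 / (4 * K) := by
    simp only [t]; field_simp; ring
  have : ‖v‖ ^ 2 / (4 * K) ≤ 2 * B := by linarith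
  rw [div_le_iff₀ (by positivity)] at this
  linarith

lemma exists_lipschitzWith_of_lipschitzWith_gradient (hg : Differentiable ℝ g)
    (hK : LipschitzWith K (gradient g)) {B : ℝ} (hB : ∀ p, |g p| ≤ B) :
    ∃ L : ℝ≥0, LipschitzWith L g := by
  refine ⟨Real.toNNReal √(8 * (K + 1) * B), lipschitzWith_of_nnnorm_fderiv_le hg fun x => ?_⟩
  rw [← NNReal.coe_le_coe, coe_nnnorm, Real.coe_toNNReal _ (Real.sqrt_nonneg _)]
  have hgrad := norm_gradient_sq_le hg (hK.weaken (le_add_of_nonneg_right zero_le_one))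
    (add_pos_of_nonneg_of_pos K.2 one_pos) hB x
  rw [gradient, LinearIsometryEquiv.norm_map] at hgrad
  exact Real.le_sqrt_of_sq_le (by exact_mod_cast hgrad)

end Gradient

section Intensity

variable {ι F : Type*} [Fintype ι]

def intensity [AddGroup F] (μ α : ℝ) (g : F → ℝ) (w : ι → F) (p : F) : ℝ :=
  μ + α * ∑ m, g (p - w m)

variable [NormedAddCommGroup F] {μ α B : ℝ} {g : F → ℝ}

lemma abs_intensity_le (hB : ∀ p, |g p| ≤ B) (w : ι → F) (p : F) :
    |intensity μ α g w p| ≤ |μ| + |α| * Fintype.card ι * B := by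
  have hsum : |∑ m, g (p - w m)| ≤ Fintype.card ι * B := calc
    _ ≤ ∑ m, |g (p - w m)| := Finset.abs_sum_le_sum_abs _ _
    _ ≤ ∑ _m : ι, B := Finset.sum_le_sum fun m _ => hB (p - w m)
    _ = Fintype.card ι * B := by rw [Finset.sum_const, Finset.card_univ, nsmul_eq_mul]
  calc |intensity μ α g w p| ≤ |μ| + |α| * |∑ m, g (p - w m)| := by
        rw [intensity, ← abs_mul]; exact abs_add_le _ _
    _ ≤ |μ| + |α| * (Fintype.card ι * B) := by gcongr
    _ = _ := by ring

lemma abs_intensity_sub_intensity_le {L : ℝ≥0} (hL : LipschitzWith L g) {w w' : ι → F}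
    {p q : F} {r : ℝ} (hr : ∀ m, ‖(p - w m) - (q - w' m)‖ ≤ r) :
    |intensity μ α g w p - intensity μ α g w' q| ≤ |α| * Fintype.card ι * L * r := by
  have hsum : |∑ m, (g (p - w m) - g (q - w' m))| ≤ Fintype.card ι * (L * r) := calc
    _ ≤ ∑ m, |g (p - w m) - g (q - w' m)| := Finset.abs_sum_le_sum_abs _ _
    _ ≤ ∑ _m : ι, L * r := Finset.sum_le_sum fun m _ => by
      rw [← Real.dist_eq]
      exact (hL.dist_le_mul _ _).trans (by rw [dist_eq_norm]; gcongr; exact hr m)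
    _ = Fintype.card ι * (L * r) := by rw [Finset.sum_const, Finset.card_univ, nsmul_eq_mul]
  calc |intensity μ α g w p - intensity μ α g w' q|
        = |α| * |∑ m, (g (p - w m) - g (q - w' m))| := by
        rw [intensity, intensity, add_sub_add_left_eq_sub, ← mul_sub, abs_mul,
          ← Finset.sum_sub_distrib]
    _ ≤ |α| * (Fintype.card ι * (L * r)) := by gcongr
    _ = _ := by ring

lemma abs_sum_intensity_perturbed_sub_le [InnerProductSpace ℝ F] [CompleteSpace F]
    {K : ℝ≥0} (hg : Differentiable ℝ g) (hK : LipschitzWith K (gradient g))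
    (u δ : ι → F) {r : ℝ} (hδ : ∀ n m, ‖δ n - δ m‖ ^ 2 ≤ r) :
    |∑ n, intensity μ α g (fun m => u m + δ m) (u n + δ n) - ∑ n, intensity μ α g u (u n) +
        α * ∑ n, ∑ m, ⟪δ m - δ n, gradient g (u n - u m)⟫| ≤
      |α| * (Fintype.card ι ^ 2 * (K * r)) := by
  have hrem : ∀ n m, |g ((u n + δ n) - (u m + δ m)) - g (u n - u m) +
      ⟪δ m - δ n, gradient g (u n - u m)⟫| ≤ K * r := fun n m => by
    have := abs_sub_sub_inner_gradient_le hg hK (u n - u m) (δ n - δ m)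
    have hinner : ⟪gradient g (u n - u m), δ n - δ m⟫ = -⟪δ m - δ n, gradient g (u n - u m)⟫ := by
      rw [real_inner_comm, ← inner_neg_left, neg_sub]
    rw [sub_add_sub_comm, hinner, sub_neg_eq_add] at this
    exact this.trans (by gcongr; exact hδ n m)
  have hsum : |∑ n, ∑ m, (g ((u n + δ n) - (u m + δ m)) - g (u n - u m) +
      ⟪δ m - δ n, gradient g (u n - u m)⟫)| ≤ Fintype.card ι ^ 2 * (K * r) := calc
    _ ≤ ∑ n, |∑ m, (g ((u n + δ n) - (u m + δ m)) - g (u n - u m) +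
          ⟪δ m - δ n, gradient g (u n - u m)⟫)| := Finset.abs_sum_le_sum_abs _ _
    _ ≤ ∑ _n : ι, ∑ _m : ι, (K * r : ℝ) := Finset.sum_le_sum fun n _ =>
        (Finset.abs_sum_le_sum_abs _ _).trans (Finset.sum_le_sum fun m _ => hrem n m)
    _ = Fintype.card ι ^ 2 * (K * r) := by
        simp only [Finset.sum_const, Finset.card_univ, nsmul_eq_mul]; ring
  have heq : ∑ n, intensity μ α g (fun m => u m + δ m) (u n + δ n) -
      ∑ n, intensity μ α g u (u n) + α * ∑ n, ∑ m, ⟪δ m - δ n, gradient g (u n - u m)⟫ =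
      α * ∑ n, ∑ m, (g ((u n + δ n) - (u m + δ m)) - g (u n - u m) +
        ⟪δ m - δ n, gradient g (u n - u m)⟫) := by
    simp only [intensity, Finset.sum_add_distrib, Finset.sum_sub_distrib, Finset.mul_sum, mul_sub,
      mul_add]
    ring
  rw [heq, abs_mul]
  gcongr

end Intensity

namespace EuclideanSpace

variable {s₀ s₁ s₂ : Set ℝ}

lemma setOf_fin_three_eq_preimage (s₀ s₁ s₂ : Set ℝ) :
    {p : E³ | p 0 ∈ s₀ ∧ p 1 ∈ s₁ ∧ p 2 ∈ s₂} = WithLp.ofLp ⁻¹' univ.pi ![s₀, s₁, s₂] := by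
  ext p
  simp [Fin.forall_fin_succ]

lemma measurableSet_pi_fin_three (h₀ : MeasurableSet s₀) (h₁ : MeasurableSet s₁)
    (h₂ : MeasurableSet s₂) : MeasurableSet (univ.pi ![s₀, s₁, s₂]) :=
  .univ_pi (Fin.cases h₀ (Fin.cases h₁ (Fin.cases h₂ finZeroElim)))

lemma measurableSet_setOf_fin_three (h₀ : MeasurableSet s₀) (h₁ : MeasurableSet s₁)
    (h₂ : MeasurableSet s₂) : MeasurableSet {p : E³ | p 0 ∈ s₀ ∧ p 1 ∈ s₁ ∧ p 2 ∈ s₂} := by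
  rw [setOf_fin_three_eq_preimage]
  exact (measurableSet_pi_fin_three h₀ h₁ h₂).preimage
    (MeasurableEquiv.toLp 2 (Fin 3 → ℝ)).symm.measurable

lemma volume_setOf_fin_three (h₀ : MeasurableSet s₀) (h₁ : MeasurableSet s₁)
    (h₂ : MeasurableSet s₂) :
    volume {p : E³ | p 0 ∈ s₀ ∧ p 1 ∈ s₁ ∧ p 2 ∈ s₂} = volume s₀ * volume s₁ * volume s₂ := by
  rw [setOf_fin_three_eq_preimage]
  refine ((volume_preserving_symm_measurableEquiv_toLp (Fin 3)).measure_preimage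
    (measurableSet_pi_fin_three h₀ h₁ h₂).nullMeasurableSet).trans ?_
  rw [volume_pi_pi, Fin.prod_univ_three]
  rfl

lemma isCompact_setOf_fin_three (h₀ : IsCompact s₀) (h₁ : IsCompact s₁) (h₂ : IsCompact s₂) :
    IsCompact {p : E³ | p 0 ∈ s₀ ∧ p 1 ∈ s₁ ∧ p 2 ∈ s₂} := by
  rw [setOf_fin_three_eq_preimage]
  exact (EuclideanSpace.equiv (Fin 3) ℝ).toHomeomorph.isCompact_preimage.mpr
    (isCompact_univ_pi (Fin.cases h₀ (Fin.cases h₁ (Fin.cases h₂ finZeroElim))))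

lemma norm_fin_three_le (x : E³) {a b c : ℝ}
    (h0 : |x 0| ≤ a) (h1 : |x 1| ≤ b) (h2 : |x 2| ≤ c) : ‖x‖ ≤ √(a ^ 2 + b ^ 2 + c ^ 2) := by
  rw [EuclideanSpace.norm_eq, Fin.sum_univ_three]
  simp only [Real.norm_eq_abs, sq_abs]
  refine Real.sqrt_le_sqrt (add_le_add (add_le_add ?_ ?_) ?_)
  exacts [sq_le_sq' (abs_le.mp h0).1 (abs_le.mp h0).2, sq_le_sq' (abs_le.mp h1).1 (abs_le.mp h1).2,
    sq_le_sq' (abs_le.mp h2).1 (abs_le.mp h2).2]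

lemma norm_fin_three_le_half (x : E³) {a b c : ℝ}
    (h : |x 0| ≤ a / 2 ∧ |x 1| ≤ b / 2 ∧ |x 2| ≤ c / 2) : ‖x‖ ≤ √(a ^ 2 + b ^ 2 + c ^ 2) / 2 := by
  have hhalf : √((a / 2) ^ 2 + (b / 2) ^ 2 + (c / 2) ^ 2) = √(a ^ 2 + b ^ 2 + c ^ 2) / 2 := by
    rw [show (a / 2) ^ 2 + (b / 2) ^ 2 + (c / 2) ^ 2 = (a ^ 2 + b ^ 2 + c ^ 2) / 2 ^ 2 by ring,
      Real.sqrt_div' _ (by positivity), Real.sqrt_sq zero_le_two]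
  exact hhalf ▸ norm_fin_three_le x h.1 h.2.1 h.2.2

end EuclideanSpace

lemma disjoint_Ico_add_natCast_mul {a Δ : ℝ} {i j : ℕ} (hij : i ≠ j) :
    Disjoint (Ico (a + i * Δ) (a + i * Δ + Δ)) (Ico (a + j * Δ) (a + j * Δ + Δ)) := by
  simpa [add_mul, add_assoc] using
    pairwise_disjoint_Ico_add_zsmul a Δ (Nat.cast_injective.ne hij)

noncomputable section Grid

def spaceTimeBox (S T : ℝ) : Set E³ :=
  {p | p 0 ∈ Icc (-S) S ∧ p 1 ∈ Icc (-S) S ∧ p 2 ∈ Icc 0 T}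

def gridPoint (S ΔX ΔY ΔT : ℝ) (v : ℕ × ℕ × ℕ) : E³ :=
  (EuclideanSpace.equiv (Fin 3) ℝ).symm ![-S + v.1 * ΔX, -S + v.2.1 * ΔY, v.2.2 * ΔT]

def gridCell (S ΔX ΔY ΔT : ℝ) (v : ℕ × ℕ × ℕ) : Set E³ :=
  {p | p 0 ∈ Ico (-S + v.1 * ΔX) (-S + v.1 * ΔX + ΔX) ∧
    p 1 ∈ Ico (-S + v.2.1 * ΔY) (-S + v.2.1 * ΔY + ΔY) ∧
    p 2 ∈ Ico (v.2.2 * ΔT) (v.2.2 * ΔT + ΔT)}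

variable {S T ΔX ΔY ΔT : ℝ} {GX GY GT : ℕ}

lemma isCompact_spaceTimeBox : IsCompact (spaceTimeBox S T) :=
  EuclideanSpace.isCompact_setOf_fin_three isCompact_Icc isCompact_Icc isCompact_Icc

lemma measurableSet_gridCell (v : ℕ × ℕ × ℕ) : MeasurableSet (gridCell S ΔX ΔY ΔT v) :=
  EuclideanSpace.measurableSet_setOf_fin_three measurableSet_Ico measurableSet_Ico measurableSet_Ico

lemma volume_gridCell (hΔX : 0 ≤ ΔX) (hΔY : 0 ≤ ΔY) (v : ℕ × ℕ × ℕ) :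
    volume (gridCell S ΔX ΔY ΔT v) = ENNReal.ofReal (ΔX * ΔY * ΔT) := by
  rw [gridCell, EuclideanSpace.volume_setOf_fin_three measurableSet_Ico measurableSet_Ico
    measurableSet_Ico]
  simp [Real.volume_Ico, ENNReal.ofReal_mul, hΔX, hΔY, mul_nonneg]

lemma norm_gridPoint_sub_le {v : ℕ × ℕ × ℕ} {p : E³} (hp : p ∈ gridCell S ΔX ΔY ΔT v) :
    ‖gridPoint S ΔX ΔY ΔT v - p‖ ≤ √(ΔX ^ 2 + ΔY ^ 2 + ΔT ^ 2) := by
  obtain ⟨⟨h0, h0'⟩, ⟨h1, h1'⟩, ⟨h2, h2'⟩⟩ := hp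
  apply EuclideanSpace.norm_fin_three_le <;>
    simp only [gridPoint, PiLp.continuousLinearEquiv_symm_apply, PiLp.sub_apply,
      Matrix.cons_val] <;>
    rw [abs_le] <;> constructor <;> linarith

lemma pairwise_disjoint_gridCell : Pairwise (Disjoint on gridCell S ΔX ΔY ΔT) := by
  rintro ⟨i, j, k⟩ ⟨i', j', k'⟩ hne
  by_cases hi : i = i'
  · by_cases hj : j = j'
    · have hk : k ≠ k' := by rintro rfl; exact hne (by rw [hi, hj])
      have hd : Disjoint (Ico (k * ΔT) (k * ΔT + ΔT)) (Ico (k' * ΔT) (k' * ΔT + ΔT)) := by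
        simpa only [zero_add] using disjoint_Ico_add_natCast_mul (a := 0) hk
      exact (hd.preimage (fun p : E³ => p 2)).mono (fun p hp => hp.2.2) (fun p hp => hp.2.2)
    · exact ((disjoint_Ico_add_natCast_mul hj).preimage (fun p : E³ => p 1)).mono
        (fun p hp => hp.2.1) (fun p hp => hp.2.1)
  · exact ((disjoint_Ico_add_natCast_mul hi).preimage (fun p : E³ => p 0)).mono
      (fun p hp => hp.1) (fun p hp => hp.1)

lemma gridCell_subset_spaceTimeBox (hΔX : 0 ≤ ΔX) (hΔY : 0 ≤ ΔY) (hΔT : 0 ≤ ΔT)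
    (hGX : GX * ΔX = 2 * S) (hGY : GY * ΔY = 2 * S) (hGT : GT * ΔT = T)
    {v : ℕ × ℕ × ℕ} (hv : v ∈ range GX ×ˢ range GY ×ˢ range GT) :
    gridCell S ΔX ΔY ΔT v ⊆ spaceTimeBox S T := by
  simp only [Finset.mem_product, Finset.mem_range] at hv
  obtain ⟨hvx, hvy, hvt⟩ := hv
  have hx : (v.1 + 1 : ℝ) ≤ GX := by exact_mod_cast hvx
  have hy : (v.2.1 + 1 : ℝ) ≤ GY := by exact_mod_cast hvy
  have ht : (v.2.2 + 1 : ℝ) ≤ GT := by exact_mod_cast hvt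
  rintro p ⟨⟨h0, h0'⟩, ⟨h1, h1'⟩, ⟨h2, h2'⟩⟩
  refine ⟨⟨?_, ?_⟩, ⟨?_, ?_⟩, ⟨?_, ?_⟩⟩ <;>
    nlinarith [v.1.cast_nonneg (α := ℝ), v.2.1.cast_nonneg (α := ℝ), v.2.2.cast_nonneg (α := ℝ)]

lemma sum_gridPoint_le_setIntegral_add (hΔX : 0 ≤ ΔX) (hΔY : 0 ≤ ΔY) (hΔT : 0 ≤ ΔT)
    (hGX : GX * ΔX = 2 * S) (hGY : GY * ΔY = 2 * S) (hGT : GT * ΔT = T)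
    {f F : E³ → ℝ} {ε : ℝ} (hf : IntegrableOn f (spaceTimeBox S T)) (hf0 : ∀ p, 0 ≤ f p)
    (hF : ∀ v, ∀ p ∈ gridCell S ΔX ΔY ΔT v, F (gridPoint S ΔX ΔY ΔT v) ≤ f p + ε) :
    ΔX * ΔY * ΔT * ∑ v ∈ range GX ×ˢ range GY ×ˢ range GT, F (gridPoint S ΔX ΔY ΔT v) ≤
      (∫ p in spaceTimeBox S T, f p) + 4 * S ^ 2 * T * ε := by
  set I := range GX ×ˢ range GY ×ˢ range GT
  have hsub : ∀ v ∈ I, gridCell S ΔX ΔY ΔT v ⊆ spaceTimeBox S T := fun v hv =>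
    gridCell_subset_spaceTimeBox hΔX hΔY hΔT hGX hGY hGT hv
  have hvol : ∀ v, volume.real (gridCell S ΔX ΔY ΔT v) = ΔX * ΔY * ΔT := fun v => by
    rw [measureReal_def, volume_gridCell hΔX hΔY, ENNReal.toReal_ofReal (by positivity)]
  have hfin : ∀ v, volume (gridCell S ΔX ΔY ΔT v) ≠ ⊤ := fun v => by
    rw [volume_gridCell hΔX hΔY]; exact ENNReal.ofReal_ne_top
  have hcell : ∀ v ∈ I, ΔX * ΔY * ΔT * F (gridPoint S ΔX ΔY ΔT v) ≤
      (∫ p in gridCell S ΔX ΔY ΔT v, f p) + ΔX * ΔY * ΔT * ε := fun v hv => by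
    have hfv := hf.mono_set (hsub v hv)
    calc ΔX * ΔY * ΔT * F (gridPoint S ΔX ΔY ΔT v)
        = ∫ _ in gridCell S ΔX ΔY ΔT v, F (gridPoint S ΔX ΔY ΔT v) := by
          rw [setIntegral_const, hvol, smul_eq_mul]
      _ ≤ ∫ p in gridCell S ΔX ΔY ΔT v, (f p + ε) :=
          setIntegral_mono_on (integrableOn_const (hfin v)) (hfv.add (integrableOn_const (hfin v)))
            (measurableSet_gridCell v) (hF v)
      _ = (∫ p in gridCell S ΔX ΔY ΔT v, f p) + ΔX * ΔY * ΔT * ε := by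
          rw [integral_add hfv (integrableOn_const (hfin v)), setIntegral_const, hvol, smul_eq_mul]
  have hunion : ∑ v ∈ I, ∫ p in gridCell S ΔX ΔY ΔT v, f p ≤ ∫ p in spaceTimeBox S T, f p := by
    rw [← integral_biUnion_finset I (fun v _ => measurableSet_gridCell v)
      (pairwise_disjoint_gridCell.set_pairwise _) (fun v hv => hf.mono_set (hsub v hv))]
    exact setIntegral_mono_set hf (Filter.Eventually.of_forall hf0)
      (iUnion₂_subset hsub).eventuallyLE
  have hcard : (#I : ℝ) * (ΔX * ΔY * ΔT) = 4 * S ^ 2 * T := by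
    simp only [I, card_product, card_range, Nat.cast_mul]
    linear_combination (GY * ΔY * GT * ΔT) * hGX + (2 * S * GT * ΔT) * hGY + 4 * S ^ 2 * hGT
  calc ΔX * ΔY * ΔT * ∑ v ∈ I, F (gridPoint S ΔX ΔY ΔT v)
      ≤ ∑ v ∈ I, ((∫ p in gridCell S ΔX ΔY ΔT v, f p) + ΔX * ΔY * ΔT * ε) := by
        rw [mul_sum]; exact sum_le_sum hcell
    _ = ∑ v ∈ I, (∫ p in gridCell S ΔX ΔY ΔT v, f p) + #I * (ΔX * ΔY * ΔT) * ε := by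
        rw [sum_add_distrib, sum_const, nsmul_eq_mul]; ring
    _ ≤ (∫ p in spaceTimeBox S T, f p) + 4 * S ^ 2 * T * ε := by rw [hcard]; linarith

lemma range_product_subset_range_succ_product :
    range GX ×ˢ range GY ×ˢ range GT ⊆ range (GX + 1) ×ˢ range (GY + 1) ×ˢ range (GT + 1) :=
  product_subset_product (range_subset_range.mpr GX.le_succ)
    (product_subset_product (range_subset_range.mpr GY.le_succ) (range_subset_range.mpr GT.le_succ))

lemma mul_card_gridBoundary_le (hS : 0 ≤ S) (hT : 0 ≤ T) (hΔX : 0 ≤ ΔX) (hΔY : 0 ≤ ΔY)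
    (hΔT : 0 ≤ ΔT) (hΔY1 : ΔY ≤ 1) (hΔT1 : ΔT ≤ 1)
    (hGX : GX * ΔX = 2 * S) (hGY : GY * ΔY = 2 * S) (hGT : GT * ΔT = T) :
    ΔX * ΔY * ΔT * #(range (GX + 1) ×ˢ range (GY + 1) ×ˢ range (GT + 1) \
        range GX ×ˢ range GY ×ˢ range GT) ≤
      (4 * S ^ 2 + 2 * S * (T + 1) + (T + 1)) * (ΔX + ΔY + ΔT) := by
  have hsub := range_product_subset_range_succ_product (GX := GX) (GY := GY) (GT := GT)
  rw [card_sdiff_of_subset hsub, Nat.cast_sub (Finset.card_le_card hsub)]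
  simp only [card_product, card_range, Nat.cast_mul, Nat.cast_add, Nat.cast_one]
  have hlayer : ΔX * ΔY * ΔT * ((GX + 1) * ((GY + 1) * (GT + 1)) - GX * (GY * GT)) =
      (GX * ΔX + ΔX) * (GY * ΔY + ΔY) * (GT * ΔT + ΔT) - GX * ΔX * (GY * ΔY) * (GT * ΔT) := by
    ring
  rw [hlayer, hGX, hGY, hGT]
  have hYT : ΔY * ΔT ≤ 1 := mul_le_one₀ hΔY1 hΔT hΔT1
  linarith [mul_nonneg hS (mul_nonneg (add_nonneg hΔX hΔY) (sub_nonneg.2 hΔT1)),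
    mul_nonneg (mul_nonneg hΔX hT) (sub_nonneg.2 hΔY1), mul_nonneg hΔX (sub_nonneg.2 hYT),
    mul_nonneg (mul_nonneg hS hS) (add_nonneg hΔX hΔY), mul_nonneg (mul_nonneg hS hT) hΔT,
    mul_nonneg hS hΔT, mul_nonneg hT hΔY, mul_nonneg hT hΔT]

lemma gridSum_le_setIntegral_add (hS : 0 ≤ S) (hT : 0 ≤ T) (hΔX : 0 ≤ ΔX) (hΔY : 0 ≤ ΔY)
    (hΔT : 0 ≤ ΔT) (hΔY1 : ΔY ≤ 1) (hΔT1 : ΔT ≤ 1)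
    (hGX : GX * ΔX = 2 * S) (hGY : GY * ΔY = 2 * S) (hGT : GT * ΔT = T)
    {f F : E³ → ℝ} {ε Λ : ℝ} (hf : IntegrableOn f (spaceTimeBox S T)) (hf0 : ∀ p, 0 ≤ f p)
    (hF : ∀ v, ∀ p ∈ gridCell S ΔX ΔY ΔT v, F (gridPoint S ΔX ΔY ΔT v) ≤ f p + ε)
    (hFΛ : ∀ v, F (gridPoint S ΔX ΔY ΔT v) ≤ Λ) (hΛ : 0 ≤ Λ) :
    ΔX * ΔY * ΔT * ∑ vx ∈ range (GX + 1), ∑ vy ∈ range (GY + 1), ∑ vt ∈ range (GT + 1),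
        F (gridPoint S ΔX ΔY ΔT (vx, vy, vt)) ≤
      (∫ p in spaceTimeBox S T, f p) + 4 * S ^ 2 * T * ε +
        Λ * (4 * S ^ 2 + 2 * S * (T + 1) + (T + 1)) * (ΔX + ΔY + ΔT) := by
  set I := range GX ×ˢ range GY ×ˢ range GT
  set J := range (GX + 1) ×ˢ range (GY + 1) ×ˢ range (GT + 1)
  have hnested : ∑ vx ∈ range (GX + 1), ∑ vy ∈ range (GY + 1), ∑ vt ∈ range (GT + 1),
      F (gridPoint S ΔX ΔY ΔT (vx, vy, vt)) = ∑ v ∈ J, F (gridPoint S ΔX ΔY ΔT v) := by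
    simp only [J, sum_product]
  have hboundary : ΔX * ΔY * ΔT * ∑ v ∈ J \ I, F (gridPoint S ΔX ΔY ΔT v) ≤
      Λ * (4 * S ^ 2 + 2 * S * (T + 1) + (T + 1)) * (ΔX + ΔY + ΔT) := calc
    _ ≤ ΔX * ΔY * ΔT * (#(J \ I) * Λ) := by
        gcongr
        simpa using sum_le_card_nsmul _ _ _ fun v _ => hFΛ v
    _ = Λ * (ΔX * ΔY * ΔT * #(J \ I)) := by ring
    _ ≤ _ := by
        rw [mul_assoc Λ]
        exact mul_le_mul_of_nonneg_left (mul_card_gridBoundary_le hS hT hΔX hΔY hΔT hΔY1 hΔT1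
          hGX hGY hGT) hΛ
  rw [hnested, ← sum_sdiff range_product_subset_range_succ_product, mul_add]
  linarith [sum_gridPoint_le_setIntegral_add hΔX hΔY hΔT hGX hGY hGT hf hf0 hF]

end Grid

lemma sq_le_sq_add_of_abs_sub_le {a b c Λ : ℝ} (h : |a - b| ≤ c) (ha : |a| ≤ Λ) (hb : |b| ≤ Λ) :
    a ^ 2 ≤ b ^ 2 + 2 * Λ * c := by
  have hab : (a - b) * (a + b) ≤ c * (2 * Λ) := (le_abs_self _).trans <| by
    rw [abs_mul]
    exact mul_le_mul h ((abs_add_le a b).trans (by linarith)) (abs_nonneg _)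
      ((abs_nonneg _).trans h)
  linear_combination hab

section Hawkes

variable {ι : Type*} [Fintype ι] {S T ΔX ΔY ΔT : ℝ} {GX GY GT : ℕ} {μ α Λ ℓ : ℝ} {g : E³ → ℝ}

lemma gridSum_intensity_sq_le (hS : 0 ≤ S) (hT : 0 ≤ T) (hΔX : 0 ≤ ΔX) (hΔY : 0 ≤ ΔY)
    (hΔT : 0 ≤ ΔT) (hΔY1 : ΔY ≤ 1) (hΔT1 : ΔT ≤ 1)
    (hGX : GX * ΔX = 2 * S) (hGY : GY * ΔY = 2 * S) (hGT : GT * ΔT = T) (hg : Continuous g)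
    (hΛ : ∀ (w : ι → E³) p, |intensity μ α g w p| ≤ Λ)
    (hℓ : ∀ (w w' : ι → E³) p q r, (∀ m, ‖(p - w m) - (q - w' m)‖ ≤ r) →
      |intensity μ α g w p - intensity μ α g w' q| ≤ ℓ * r)
    (u δ : ι → E³) (hδ : ∀ m, ‖δ m‖ ≤ √(ΔX ^ 2 + ΔY ^ 2 + ΔT ^ 2) / 2) :
    ΔX * ΔY * ΔT * ∑ vx ∈ range (GX + 1), ∑ vy ∈ range (GY + 1), ∑ vt ∈ range (GT + 1),
        intensity μ α g (fun m => u m + δ m) (gridPoint S ΔX ΔY ΔT (vx, vy, vt)) ^ 2 ≤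
      (∫ p in spaceTimeBox S T, intensity μ α g u p ^ 2) +
        (12 * S ^ 2 * T * Λ * ℓ + 3 * Λ ^ 2 * (4 * S ^ 2 + 2 * S * (T + 1) + (T + 1))) *
          √(ΔX ^ 2 + ΔY ^ 2 + ΔT ^ 2) := by
  set D := √(ΔX ^ 2 + ΔY ^ 2 + ΔT ^ 2)
  have hΛ0 : 0 ≤ Λ := (abs_nonneg _).trans (hΛ u 0)
  have hcell : ∀ v, ∀ p ∈ gridCell S ΔX ΔY ΔT v,
      intensity μ α g (fun m => u m + δ m) (gridPoint S ΔX ΔY ΔT v) ^ 2 ≤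
        intensity μ α g u p ^ 2 + 2 * Λ * (ℓ * (3 * D / 2)) := fun v p hp =>
    sq_le_sq_add_of_abs_sub_le (hℓ _ _ _ _ _ fun m => calc
      ‖(gridPoint S ΔX ΔY ΔT v - (u m + δ m)) - (p - u m)‖
          = ‖(gridPoint S ΔX ΔY ΔT v - p) - δ m‖ := by congr 1; abel
      _ ≤ D + D / 2 := (norm_sub_le _ _).trans (add_le_add (norm_gridPoint_sub_le hp) (hδ m))
      _ = 3 * D / 2 := by ring) (hΛ _ _) (hΛ _ _)
  have hint : IntegrableOn (fun p => intensity μ α g u p ^ 2) (spaceTimeBox S T) :=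
    (Continuous.continuousOn (by unfold intensity; fun_prop)).integrableOn_compact
      isCompact_spaceTimeBox
  have hsum : ΔX + ΔY + ΔT ≤ 3 * D := by
    have hXD : ΔX ≤ D := Real.le_sqrt_of_sq_le (by nlinarith)
    have hYD : ΔY ≤ D := Real.le_sqrt_of_sq_le (by nlinarith)
    have hTD : ΔT ≤ D := Real.le_sqrt_of_sq_le (by nlinarith)
    linarith
  have hgrid := gridSum_le_setIntegral_add hS hT hΔX hΔY hΔT hΔY1 hΔT1 hGX hGY hGT hint
    (F := fun P => intensity μ α g (fun m => u m + δ m) P ^ 2) (fun p => sq_nonneg _) hcell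
    (fun v => sq_le_sq' (abs_le.mp (hΛ _ _)).1 (abs_le.mp (hΛ _ _)).2) (sq_nonneg Λ)
  have hK : 0 ≤ Λ ^ 2 * (4 * S ^ 2 + 2 * S * (T + 1) + (T + 1)) := by positivity
  linear_combination hgrid + mul_le_mul_of_nonneg_left hsum hK

end Hawkes

theorem discretized_loss_perturbation_bound_general
    (S T : ℝ) (hS : 0 < S) (hT : 0 < T)
    (N : ℕ) (u : Fin N → EuclideanSpace ℝ (Fin 3))
    (g : EuclideanSpace ℝ (Fin 3) → ℝ) (M B : ℝ)
    (hgbdd : ∀ p, |g p| ≤ B)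
    (hg : Differentiable ℝ g)
    (hlip : ∀ a b : EuclideanSpace ℝ (Fin 3),
      ‖gradient g a - gradient g b‖ ≤ M * ‖a - b‖)
    (μ α : ℝ) :
    ∃ C₁ C₂ : ℝ, 0 ≤ C₁ ∧ 0 ≤ C₂ ∧
      ∀ (ΔX ΔY ΔT : ℝ) (GX GY GT : ℕ),
        0 < ΔX → 0 < ΔY → 0 < ΔT →
        0 < GX → 0 < GY → 0 < GT →
        (GX : ℝ) * ΔX = 2 * S → (GY : ℝ) * ΔY = 2 * S → (GT : ℝ) * ΔT = T →
        -- Assumption 1: no two events collapse on the same grid bin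
        (∀ n m, n ≠ m → ΔX < |u n 0 - u m 0|) →
        (∀ n m, n ≠ m → ΔY < |u n 1 - u m 1|) →
        (∀ n m, n ≠ m → ΔT < |u n 2 - u m 2|) →
        max ΔX (max ΔY ΔT) ≤ 1 →
        ∀ δ : Fin N → EuclideanSpace ℝ (Fin 3),
          -- each perturbation component is bounded by half the stepsize
          (∀ n, |δ n 0| ≤ ΔX / 2 ∧ |δ n 1| ≤ ΔY / 2 ∧ |δ n 2| ≤ ΔT / 2) →
          -- the projected event `uₙ + δₙ` is a grid point
          (∀ n, ∃ vx ≤ GX, ∃ vy ≤ GY, ∃ vt ≤ GT,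
            u n + δ n = (EuclideanSpace.equiv (Fin 3) ℝ).symm
              ![-S + (vx : ℝ) * ΔX, -S + (vy : ℝ) * ΔY, (vt : ℝ) * ΔT]) →
          -- discretized ℓ₂ loss
          ΔX * ΔY * ΔT *
              (∑ vx ∈ Finset.range (GX + 1), ∑ vy ∈ Finset.range (GY + 1),
                ∑ vt ∈ Finset.range (GT + 1),
                (μ + α * ∑ m, g ((EuclideanSpace.equiv (Fin 3) ℝ).symm
                  ![-S + (vx : ℝ) * ΔX, -S + (vy : ℝ) * ΔY, (vt : ℝ) * ΔT] -
                  (u m + δ m))) ^ 2) -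
            2 * ∑ n, (μ + α * ∑ m, g ((u n + δ n) - (u m + δ m))) ≤
          -- continuous ℓ₂ loss
          ((∫ p in {p : EuclideanSpace ℝ (Fin 3) |
              p 0 ∈ Set.Icc (-S) S ∧ p 1 ∈ Set.Icc (-S) S ∧ p 2 ∈ Set.Icc (0 : ℝ) T},
              (μ + α * ∑ m, g (p - u m)) ^ 2) -
            2 * ∑ n, (μ + α * ∑ m, g (u n - u m))) +
          C₁ * Real.sqrt (ΔX ^ 2 + ΔY ^ 2 + ΔT ^ 2) +
          2 * α * ∑ n, ∑ m, ⟪δ m - δ n, gradient g (u n - u m)⟫ +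
          C₂ * (ΔX ^ 2 + ΔY ^ 2 + ΔT ^ 2) := by
  have hK : LipschitzWith (M.toNNReal + 1) (gradient g) := .of_dist_le_mul fun a b => by
    rw [dist_eq_norm, dist_eq_norm]
    exact (hlip a b).trans (by gcongr; push_cast; linarith [Real.le_coe_toNNReal M])
  obtain ⟨L, hL⟩ := exists_lipschitzWith_of_lipschitzWith_gradient hg hK hgbdd
  have hB : 0 ≤ B := (abs_nonneg _).trans (hgbdd 0)
  refine ⟨12 * S ^ 2 * T * (|μ| + |α| * N * B) * (|α| * N * L) +
      3 * (|μ| + |α| * N * B) ^ 2 * (4 * S ^ 2 + 2 * S * (T + 1) + (T + 1)),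
    |α| * (N ^ 2 * (M.toNNReal + 1)) * 2, by positivity, by positivity, ?_⟩
  intro ΔX ΔY ΔT GX GY GT hΔX hΔY hΔT _ _ _ hGX hGY hGT _ _ _ hΔ1 δ hδ _
  obtain ⟨-, hΔY1, hΔT1⟩ : ΔX ≤ 1 ∧ ΔY ≤ 1 ∧ ΔT ≤ 1 := by simpa only [max_le_iff] using hΔ1
  have hδD : ∀ n, ‖δ n‖ ≤ √(ΔX ^ 2 + ΔY ^ 2 + ΔT ^ 2) / 2 := fun n =>
    EuclideanSpace.norm_fin_three_le_half _ (hδ n)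
  have hδδ : ∀ n m, ‖δ n - δ m‖ ^ 2 ≤ ΔX ^ 2 + ΔY ^ 2 + ΔT ^ 2 := fun n m => by
    rw [← Real.sq_sqrt (by positivity : 0 ≤ ΔX ^ 2 + ΔY ^ 2 + ΔT ^ 2)]
    exact pow_le_pow_left₀ (norm_nonneg _)
      ((norm_sub_le _ _).trans (by linarith [hδD n, hδD m])) 2
  have hintegral := gridSum_intensity_sq_le (μ := μ) (α := α) hS.le hT.le hΔX.le hΔY.le hΔT.le
    hΔY1 hΔT1 hGX hGY hGT hg.continuous (fun w p => abs_intensity_le hgbdd w p)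
    (fun w w' p q r h => abs_intensity_sub_intensity_le hL h) u δ hδD
  have hdata := abs_le.mp (abs_sum_intensity_perturbed_sub_le (μ := μ) (α := α) hg hK u δ hδδ)
  simp only [intensity, gridPoint, spaceTimeBox, Fintype.card_fin, NNReal.coe_add, NNReal.coe_one]
    at hintegral hdata
  linarith [hdata.1]

/-- Second claim of Proposition 1 (single process): there exist constants `C₁, C₂ ≥ 0`
depending only on the model and the events (not on the grid) such that, for every
regular grid of the space-time domain `[-S,S]² × [0,T]` satisfying Assumption 1 and
with stepsizes at most `1`, the discretized ℓ₂ loss is bounded by the continuous ℓ₂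
loss plus `C₁‖Δ‖₂`, plus the explicit linear term
`2α Σₙ Σₘ ⟪δₘ - δₙ, ∇g(uₙ - uₘ)⟫` in the projection perturbations, plus `C₂‖Δ‖₂²`. -/
theorem discretized_loss_perturbation_bound
    (S T : ℝ) (hS : 0 < S) (hT : 0 < T)
    (N : ℕ) (u : Fin N → EuclideanSpace ℝ (Fin 3))
    (hdom : ∀ n, u n 0 ∈ Set.Icc (-S) S ∧ u n 1 ∈ Set.Icc (-S) S ∧
      u n 2 ∈ Set.Icc (0 : ℝ) T)
    (hdist : ∀ n m, n ≠ m → u n 0 ≠ u m 0 ∧ u n 1 ≠ u m 1 ∧ u n 2 ≠ u m 2)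
    (g : EuclideanSpace ℝ (Fin 3) → ℝ) (M B : ℝ)
    (hgbdd : ∀ p, |g p| ≤ B)
    (hg : Differentiable ℝ g)
    (hlip : ∀ a b : EuclideanSpace ℝ (Fin 3),
      ‖gradient g a - gradient g b‖ ≤ M * ‖a - b‖)
    (μ α : ℝ) (hμ : 0 ≤ μ) (hα : 0 ≤ α) :
    ∃ C₁ C₂ : ℝ, 0 ≤ C₁ ∧ 0 ≤ C₂ ∧
      ∀ (ΔX ΔY ΔT : ℝ) (GX GY GT : ℕ),
        0 < ΔX → 0 < ΔY → 0 < ΔT →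
        0 < GX → 0 < GY → 0 < GT →
        (GX : ℝ) * ΔX = 2 * S → (GY : ℝ) * ΔY = 2 * S → (GT : ℝ) * ΔT = T →
        -- Assumption 1: no two events collapse on the same grid bin
        (∀ n m, n ≠ m → ΔX < |u n 0 - u m 0|) →
        (∀ n m, n ≠ m → ΔY < |u n 1 - u m 1|) →
        (∀ n m, n ≠ m → ΔT < |u n 2 - u m 2|) →
        max ΔX (max ΔY ΔT) ≤ 1 →
        ∀ δ : Fin N → EuclideanSpace ℝ (Fin 3),
          -- each perturbation component is bounded by half the stepsize
          (∀ n, |δ n 0| ≤ ΔX / 2 ∧ |δ n 1| ≤ ΔY / 2 ∧ |δ n 2| ≤ ΔT / 2) →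
          -- the projected event `uₙ + δₙ` is a grid point
          (∀ n, ∃ vx ≤ GX, ∃ vy ≤ GY, ∃ vt ≤ GT,
            u n + δ n = (EuclideanSpace.equiv (Fin 3) ℝ).symm
              ![-S + (vx : ℝ) * ΔX, -S + (vy : ℝ) * ΔY, (vt : ℝ) * ΔT]) →
          -- discretized ℓ₂ loss
          ΔX * ΔY * ΔT *
              (∑ vx ∈ Finset.range (GX + 1), ∑ vy ∈ Finset.range (GY + 1),
                ∑ vt ∈ Finset.range (GT + 1),
                (μ + α * ∑ m, g ((EuclideanSpace.equiv (Fin 3) ℝ).symm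
                  ![-S + (vx : ℝ) * ΔX, -S + (vy : ℝ) * ΔY, (vt : ℝ) * ΔT] -
                  (u m + δ m))) ^ 2) -
            2 * ∑ n, (μ + α * ∑ m, g ((u n + δ n) - (u m + δ m))) ≤
          -- continuous ℓ₂ loss
          ((∫ p in {p : EuclideanSpace ℝ (Fin 3) |
              p 0 ∈ Set.Icc (-S) S ∧ p 1 ∈ Set.Icc (-S) S ∧ p 2 ∈ Set.Icc (0 : ℝ) T},
              (μ + α * ∑ m, g (p - u m)) ^ 2) -
            2 * ∑ n, (μ + α * ∑ m, g (u n - u m))) +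
          C₁ * Real.sqrt (ΔX ^ 2 + ΔY ^ 2 + ΔT ^ 2) +
          2 * α * ∑ n, ∑ m, ⟪δ m - δ n, gradient g (u n - u m)⟫ +
          C₂ * (ΔX ^ 2 + ΔY ^ 2 + ΔT ^ 2) :=
  discretized_loss_perturbation_bound_general S T hS hT N u g M B hgbdd hg hlip μ α
end

section
/- Let z : ℤ³ → ℝ be finitely supported, let V ⊂ ℤ³ and K ⊂ ℤ³ be finite sets, let g : K → ℝ, let μ, α ∈ ℝ and let c > 0. Define the discretized intensity λ̃[v] = μ + α Σ_{τ∈K} g[τ]·z[v − τ] for v ∈ ℤ³, and the precomputation terms Φ_G(τ) = Σ_{v∈V} z[v − τ], Ψ(τ, τ') = Σ_{v∈V} z[v − τ]·z[v − τ'], Φ_H(τ) = Σ_{w∈ℤ³} z[w]·z[w − τ], and N = Σ_{w∈ℤ³} z[w]. Then c·Σ_{v∈V} λ̃[v]² − 2·Σ_{w∈ℤ³} z[w]·λ̃[w] = c·μ²·|V| + 2c·μ·α·Σ_{τ∈K} g[τ]·Φ_G(τ) + c·α²·Σ_{τ∈K} Σ_{τ'∈K} g[τ]·g[τ']·Ψ(τ,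 τ') − 2·(μ·N + α·Σ_{τ∈K} g[τ]·Φ_H(τ)). -/
/-- Decomposition of the discretized ℓ₂ loss into precomputation terms: for a finitely
supported event-count function `z` on the integer grid `ℤ³`, a discretized kernel `g`
supported on the finite lag set `K`, and the discretized intensity
`λ̃[v] = μ + α Σ_{τ∈K} g[τ] z[v-τ]`, the discretized loss
`c Σ_{v∈V} λ̃[v]² - 2 Σ_w z[w] λ̃[w]` equals an expression in the parameter-independent
precomputation terms `Φ_G`, `Ψ`, `Φ_H` and `N`. -/
theorem discretized_loss_precomputation_decomposition
    (z : (ℤ × ℤ × ℤ) →₀ ℝ) (V K : Finset (ℤ × ℤ × ℤ))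
    (g : ℤ × ℤ × ℤ → ℝ) (μ α c : ℝ) (hc : 0 < c)
    (lam : ℤ × ℤ × ℤ → ℝ)
    (hlam : ∀ v, lam v = μ + α * ∑ τ ∈ K, g τ * z (v - τ))
    (ΦG : ℤ × ℤ × ℤ → ℝ)
    (hΦG : ∀ τ, ΦG τ = ∑ v ∈ V, z (v - τ))
    (Ψ : ℤ × ℤ × ℤ → ℤ × ℤ × ℤ → ℝ)
    (hΨ : ∀ τ τ', Ψ τ τ' = ∑ v ∈ V, z (v - τ) * z (v - τ'))
    (ΦH : ℤ × ℤ × ℤ → ℝ)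
    (hΦH : ∀ τ, ΦH τ = ∑ w ∈ z.support, z w * z (w - τ))
    (Nz : ℝ) (hNz : Nz = ∑ w ∈ z.support, z w) :
    c * ∑ v ∈ V, lam v ^ 2 - 2 * ∑ w ∈ z.support, z w * lam w =
      c * μ ^ 2 * V.card +
      2 * c * μ * α * ∑ τ ∈ K, g τ * ΦG τ +
      c * α ^ 2 * ∑ τ ∈ K, ∑ τ' ∈ K, g τ * g τ' * Ψ τ τ' -
      2 * (μ * Nz + α * ∑ τ ∈ K, g τ * ΦH τ) := by
  simp only [hlam, hΦG, hΨ, hΦH, hNz]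
  have h1 : ∑ v ∈ V, (μ + α * ∑ τ ∈ K, g τ * z (v - τ)) ^ 2 =
      μ ^ 2 * V.card + 2 * μ * α * ∑ τ ∈ K, g τ * ∑ v ∈ V, z (v - τ) +
      α ^ 2 * ∑ τ ∈ K, ∑ τ' ∈ K, g τ * g τ' * ∑ v ∈ V, z (v - τ) * z (v - τ') := by
    have key : ∀ v : ℤ × ℤ × ℤ, (μ + α * ∑ τ ∈ K, g τ * z (v - τ)) ^ 2 =
        μ ^ 2 + 2 * μ * α * ∑ τ ∈ K, g τ * z (v - τ) +
        α ^ 2 * ∑ τ ∈ K, ∑ τ' ∈ K, g τ * g τ' * (z (v - τ) * z (v - τ')) := by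
      intro v
      have hsq : (∑ τ ∈ K, g τ * z (v - τ)) * (∑ τ ∈ K, g τ * z (v - τ)) =
          ∑ τ ∈ K, ∑ τ' ∈ K, g τ * g τ' * (z (v - τ) * z (v - τ')) := by
        rw [Finset.sum_mul_sum]
        exact Finset.sum_congr rfl fun τ _ => Finset.sum_congr rfl fun τ' _ => by ring
      rw [add_sq, mul_pow, sq (∑ τ ∈ K, g τ * z (v - τ)), hsq]
      ring
    simp only [key, Finset.sum_add_distrib, Finset.sum_const, nsmul_eq_mul]
    congr 1
    · congr 1
      · ring
      · simp only [Finset.mul_sum]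
        rw [Finset.sum_comm]
    · simp only [Finset.mul_sum]
      rw [Finset.sum_comm]
      refine Finset.sum_congr rfl fun τ _ => ?_
      rw [Finset.sum_comm]
  have h2 : ∑ w ∈ z.support, z w * (μ + α * ∑ τ ∈ K, g τ * z (w - τ)) =
      μ * ∑ w ∈ z.support, z w + α * ∑ τ ∈ K, g τ * ∑ w ∈ z.support, z w * z (w - τ) := by
    have key : ∀ w : ℤ × ℤ × ℤ, z w * (μ + α * ∑ τ ∈ K, g τ * z (w - τ)) =
        μ * z w + α * ∑ τ ∈ K, g τ * (z w * z (w - τ)) := by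
      intro w
      simp only [mul_add, Finset.mul_sum]
      congr 1
      · ring
      · exact Finset.sum_congr rfl fun τ _ => by ring
    simp only [key, Finset.sum_add_distrib]
    congr 1
    · rw [Finset.mul_sum]
    · simp only [Finset.mul_sum]
      rw [Finset.sum_comm]
  rw [h1, h2]; ring
end

section
/- Let E be a finite-dimensional real inner product space, let ε > 0 and η ≥ 0. Let L : E → ℝ be twice continuously differentiable with L''(x)(v, v) ≥ ε‖v‖² for all x, v ∈ E, and let L̃ : E → ℝ be differentiable with ‖∇L̃(θ) − ∇L(θ)‖ ≤ η for all θ ∈ E. If θ_c ∈ E satisfies ∇L(θ_c) = 0 and θ_Δ ∈ E satisfies ∇L̃(θ_Δ) = 0, then ‖θ_Δ − θ_c‖ ≤ η/ε. -/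
open RealInnerProductSpace

/-! A Hessian bounded below by `ε` makes `∇L` strongly monotone: with `d = θΔ - θc`, the function
`t ↦ ⟪∇L (θc + t d), d⟫` has derivative `L''(θc + t d)(d, d) ≥ ε ‖d‖²`, so
`ε ‖d‖² ≤ ⟪∇L θΔ - ∇L θc, d⟫` and, by Cauchy–Schwarz, `ε ‖d‖ ≤ ‖∇L θΔ - ∇L θc‖`. Since
`∇L θc = 0` and `∇L̃ θΔ = 0`, the right side is `‖∇L̃ θΔ - ∇L θΔ‖ ≤ η`. -/

theorem hasDerivAt_fderiv_apply_add_smul {E F : Type*} [NormedAddCommGroup E] [NormedSpace ℝ E]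
    [NormedAddCommGroup F] [NormedSpace ℝ F] {f : E → F} (hf : ContDiff ℝ 2 f) (x v : E)
    (t : ℝ) :
    HasDerivAt (fun s : ℝ => fderiv ℝ f (x + s • v) v)
      (iteratedFDeriv ℝ 2 f (x + t • v) ![v, v]) t := by
  have hline : HasDerivAt (fun s : ℝ => x + s • v) v t := by
    simpa using ((hasDerivAt_id t).smul_const v).const_add x
  have hf' : Differentiable ℝ (fderiv ℝ f) :=
    (hf.fderiv_right le_rfl).differentiable one_ne_zero
  rw [iteratedFDeriv_two_apply]
  simpa using ((hf' _).hasFDerivAt.comp_hasDerivAt t hline).clm_apply (hasDerivAt_const t v)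

theorem mul_norm_sq_le_inner_gradient_sub {E : Type*} [NormedAddCommGroup E]
    [InnerProductSpace ℝ E] [CompleteSpace E] {f : E → ℝ} {ε : ℝ} (hf : ContDiff ℝ 2 f)
    (hhess : ∀ x v : E, ε * ‖v‖ ^ 2 ≤ iteratedFDeriv ℝ 2 f x ![v, v]) (x y : E) :
    ε * ‖y - x‖ ^ 2 ≤ ⟪gradient f y - gradient f x, y - x⟫ := by
  have hderiv := hasDerivAt_fderiv_apply_add_smul hf x (y - x)
  have hmvt := mul_sub_le_image_sub_of_le_deriv (fun t => (hderiv t).differentiableAt)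
    (fun t => (hderiv t).deriv ▸ hhess _ (y - x)) zero_le_one
  simpa [inner_sub_left, inner_gradient_left] using hmvt

theorem mul_norm_le_norm_of_mul_norm_sq_le_inner {E : Type*} [NormedAddCommGroup E]
    [InnerProductSpace ℝ E] {ε : ℝ} {u v : E} (h : ε * ‖v‖ ^ 2 ≤ ⟪u, v⟫) :
    ε * ‖v‖ ≤ ‖u‖ := by
  rcases (norm_nonneg v).eq_or_lt with hv | hv
  · simp [← hv]
  · have := h.trans (real_inner_le_norm u v)
    nlinarith

theorem perturbed_minimizer_distance_bound_general
    {E : Type*} [NormedAddCommGroup E] [InnerProductSpace ℝ E]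
    [FiniteDimensional ℝ E]
    (ε η : ℝ) (hε : 0 < ε)
    (L L' : E → ℝ)
    (hL : ContDiff ℝ 2 L)
    (hconv : ∀ x v : E, ε * ‖v‖ ^ 2 ≤ iteratedFDeriv ℝ 2 L x ![v, v])
    (hgrad : ∀ θ : E, ‖gradient L' θ - gradient L θ‖ ≤ η)
    (θc θΔ : E) (hθc : gradient L θc = 0) (hθΔ : gradient L' θΔ = 0) :
    ‖θΔ - θc‖ ≤ η / ε := by
  have hbound : ε * ‖θΔ - θc‖ ≤ η :=
    calc ε * ‖θΔ - θc‖ ≤ ‖gradient L θΔ - gradient L θc‖ :=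
          mul_norm_le_norm_of_mul_norm_sq_le_inner <|
            mul_norm_sq_le_inner_gradient_sub hL hconv θc θΔ
      _ = ‖gradient L' θΔ - gradient L θΔ‖ := by rw [hθc, hθΔ, sub_zero, zero_sub, norm_neg]
      _ ≤ η := hgrad θΔ
  rwa [le_div_iff₀ hε, mul_comm]

/-- Quantitative core of Proposition 2: if `L` is `C²` with Hessian bounded below by
`ε` times the identity, and the perturbed loss `L̃` has gradient uniformly within `η`
of that of `L`, then any critical point `θ_Δ` of `L̃` is within distance `η/ε` of any
critical point `θ_c` of `L`. -/
theorem perturbed_minimizer_distance_bound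
    {E : Type*} [NormedAddCommGroup E] [InnerProductSpace ℝ E]
    [FiniteDimensional ℝ E]
    (ε η : ℝ) (hε : 0 < ε) (hη : 0 ≤ η)
    (L L' : E → ℝ)
    (hL : ContDiff ℝ 2 L)
    (hconv : ∀ x v : E, ε * ‖v‖ ^ 2 ≤ iteratedFDeriv ℝ 2 L x ![v, v])
    (hL' : Differentiable ℝ L')
    (hgrad : ∀ θ : E, ‖gradient L' θ - gradient L θ‖ ≤ η)
    (θc θΔ : E) (hθc : gradient L θc = 0) (hθΔ : gradient L' θΔ = 0) :
    ‖θΔ - θc‖ ≤ η / ε :=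
  perturbed_minimizer_distance_bound_general ε η hε L L' hL hconv hgrad θc θΔ hθc hθΔ
end
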